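/- The map sending a frequency congruent partition λ, with multiplicities m_i(λ) = i·e_i for each i ≥ 1, to the partition in which i² occurs with multiplicity e_i, is a size-preserving bijection from the set of frequency congruent partitions onto the set of partitions into perfect squares. -/

import Mathlib

/-- Frequency congruent multiset of positive parts: each part is positive and
every positive integer `i` divides the multiplicity of `i`. -/
def IsFreqCong (s : Multiset ℕ) : Prop :=
  (∀ x ∈ s, 0 < x) ∧ ∀ i : ℕ, 0 < i → i ∣ s.count i

/-- Partition into perfect squares: all parts are squares of positive integers. -/
def IsSquarePartition (s : Multiset ℕ) : Prop :=
  (∀ x ∈ s, 0 < x) ∧ ∀ x ∈ s, ∃ m : ℕ, 0 < m ∧ x = m * m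

/-- The map sending a partition with multiplicities `m_i = i · e_i` to the
partition in which `i²` occurs with multiplicity `e_i`. -/
def sqMap (s : Multiset ℕ) : Multiset ℕ :=
  ∑ i ∈ s.toFinset, Multiset.replicate (s.count i / i) (i * i)

/-! A multiset of naturals is determined by its counts, and `sqMap s` has `s.count j / j`
copies of `j²` and no other parts. On frequency congruent `s` this division is exact, so
`s.count j = j · (sqMap s).count (j²)`, which gives injectivity, and each part `i` of `s`
contributes `(m_i / i) · i² = m_i · i` to the size of `sqMap s`. A square partition is hit by
the multiset obtained by replacing each part `m²` with `m` copies of `m`. -/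

/-- The case `i = 0` encodes positivity of the parts, as `0 ∣ n ↔ n = 0`. -/
theorem isFreqCong_iff_forall_dvd_count {s : Multiset ℕ} :
    IsFreqCong s ↔ ∀ i, i ∣ s.count i := by
  have zero_dvd_count_iff : 0 ∣ s.count 0 ↔ 0 ∉ s := by
    rw [zero_dvd_iff, Multiset.count_eq_zero]
  constructor
  · rintro ⟨hpos, hdvd⟩ i
    rcases i.eq_zero_or_pos with rfl | hi
    · exact zero_dvd_count_iff.mpr fun h0 ↦ (hpos 0 h0).false
    · exact hdvd i hi
  · intro hdvd
    refine ⟨fun x hx ↦ Nat.pos_of_ne_zero ?_, fun i _ ↦ hdvd i⟩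
    rintro rfl
    exact zero_dvd_count_iff.mp (hdvd 0) hx

theorem count_sqMap_mul_self (s : Multiset ℕ) (j : ℕ) :
    (sqMap s).count (j * j) = s.count j / j := by
  rw [sqMap, Multiset.count_sum', Finset.sum_eq_single j]
  · simp
  · intro i _ hij
    rw [Multiset.count_replicate, if_neg (Nat.mul_self_inj.not.mpr hij)]
  · intro hj
    rw [Multiset.count_eq_zero_of_notMem (Multiset.mem_toFinset.not.mp hj)]
    simp

theorem exists_eq_mul_self_of_mem_sqMap {s : Multiset ℕ} {x : ℕ} (hx : x ∈ sqMap s) :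
    ∃ i ∈ s, x = i * i := by
  obtain ⟨i, hi, hx⟩ := Multiset.mem_sum.mp hx
  exact ⟨i, Multiset.mem_toFinset.mp hi, Multiset.eq_of_mem_replicate hx⟩

theorem sqMap_eq_of_count_mul_self {s t : Multiset ℕ} (ht : ∀ x ∈ t, ∃ m, x = m * m)
    (hcount : ∀ j, t.count (j * j) = s.count j / j) : sqMap s = t := by
  ext x
  by_cases hx : ∃ j, x = j * j
  · obtain ⟨j, rfl⟩ := hx
    rw [count_sqMap_mul_self, hcount]
  · have hs : x ∉ sqMap s := fun h ↦
      hx ((exists_eq_mul_self_of_mem_sqMap h).imp fun _ ↦ And.right)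
    have ht' : x ∉ t := fun h ↦ hx (ht x h)
    rw [Multiset.count_eq_zero_of_notMem hs, Multiset.count_eq_zero_of_notMem ht']

theorem count_eq_mul_count_sqMap {s : Multiset ℕ} (hs : IsFreqCong s) (j : ℕ) :
    s.count j = j * (sqMap s).count (j * j) := by
  rw [count_sqMap_mul_self, Nat.mul_div_cancel' (isFreqCong_iff_forall_dvd_count.mp hs j)]

theorem sum_sqMap {s : Multiset ℕ} (hs : IsFreqCong s) : (sqMap s).sum = s.sum := by
  rw [sqMap, Multiset.sum_sum, Finset.sum_multiset_count]
  refine Finset.sum_congr rfl fun i _ ↦ ?_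
  rw [Multiset.sum_replicate, smul_eq_mul, smul_eq_mul, ← mul_assoc,
    Nat.div_mul_cancel (isFreqCong_iff_forall_dvd_count.mp hs i)]

theorem isSquarePartition_sqMap {s : Multiset ℕ} (hs : IsFreqCong s) :
    IsSquarePartition (sqMap s) := by
  have hsq : ∀ x ∈ sqMap s, ∃ m, 0 < m ∧ x = m * m := fun x hx ↦ by
    obtain ⟨i, hi, rfl⟩ := exists_eq_mul_self_of_mem_sqMap hx
    exact ⟨i, hs.1 i hi, rfl⟩
  refine ⟨fun x hx ↦ ?_, hsq⟩
  obtain ⟨m, hm, rfl⟩ := hsq x hx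
  positivity

theorem count_bind_replicate_self (u : Multiset ℕ) (j : ℕ) :
    (u.bind fun m ↦ Multiset.replicate m m).count j = j * u.count j := by
  induction u using Multiset.induction_on with
  | empty => simp
  | cons m u ih =>
    rw [Multiset.cons_bind, Multiset.count_add, ih, Multiset.count_replicate,
      Multiset.count_cons]
    obtain rfl | h := eq_or_ne m j
    · simp [mul_add, add_comm]
    · simp [h, h.symm]

theorem exists_isFreqCong_sqMap_eq {t : Multiset ℕ} (ht : IsSquarePartition t) :
    ∃ s, IsFreqCong s ∧ sqMap s = t := by
  set u := t.map Nat.sqrt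
  have hu : u.map (fun m ↦ m * m) = t := by
    rw [Multiset.map_map]
    conv_rhs => rw [← Multiset.map_id t]
    refine Multiset.map_congr rfl fun x hx ↦ ?_
    obtain ⟨m, -, rfl⟩ := ht.2 x hx
    simp [Nat.sqrt_eq]
  refine ⟨u.bind fun m ↦ Multiset.replicate m m, ?_, ?_⟩
  · exact isFreqCong_iff_forall_dvd_count.mpr fun j ↦ by
      rw [count_bind_replicate_self]; exact dvd_mul_right j _
  · refine sqMap_eq_of_count_mul_self (fun x hx ↦ (ht.2 x hx).imp fun _ ↦ And.right) fun j ↦ ?_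
    rcases j.eq_zero_or_pos with rfl | hj
    · simpa using fun h ↦ (ht.1 0 h).false
    · rw [count_bind_replicate_self, Nat.mul_div_cancel_left _ hj, ← hu,
        Multiset.count_map_eq_count' _ _ fun _ _ ↦ Nat.mul_self_inj.mp]

theorem sqMap_bijOn_size_preserving :
    Set.BijOn sqMap {s : Multiset ℕ | IsFreqCong s} {t : Multiset ℕ | IsSquarePartition t}
      ∧ ∀ s : Multiset ℕ, IsFreqCong s → (sqMap s).sum = s.sum := by
  refine ⟨⟨fun s ↦ isSquarePartition_sqMap, fun s hs s' hs' h ↦ ?_,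
    fun t ht ↦ exists_isFreqCong_sqMap_eq ht⟩, fun s ↦ sum_sqMap⟩
  ext j
  rw [count_eq_mul_count_sqMap hs, count_eq_mul_count_sqMap hs', h]
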